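/- arXiv:2605.22191 — 2 statements merged into one kernel-verified Lean document; each statement's English description precedes it below -/
import Mathlib

section
/- With the same setup (f β-smooth, Δ = f(y+δv) - f(y-δv) - 2δ⟨m,v⟩, ĝ = m + (d/(2δ))Δ v, v uniform on S^{d-1}), the bias b = E[ĝ] - ∇f(y) satisfies ‖b‖ ≤ (d/2) β δ. -/
/-!
Write `R(v) = f(y + δv) - f(y - δv) - 2⟪∇f(y), δv⟫`. The estimator splits as
`m + d⟪∇f(y) - m, v⟫ v + (d / 2δ) R(v) v`. An orthogonally invariant probability measure on the
unit sphere is isotropic, `E[v vᵀ] = I / d` (reflecting a coordinate kills the off-diagonal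
moments, swapping two coordinates equalises the diagonal ones, and their trace is `E‖v‖² = 1`),
so the first two terms average to exactly `∇f(y)`. A `β`-Lipschitz gradient gives the
second-order bound `|R(v)| ≤ β δ²` on the sphere, so the bias is at most `(d / 2δ) β δ²`.
-/

open MeasureTheory Set
open scoped RealInnerProductSpace

section LipschitzGradient

variable {E : Type*} [NormedAddCommGroup E] [InnerProductSpace ℝ E] [CompleteSpace E]
  {f : E → ℝ} {β : ℝ}

theorem abs_sub_sub_inner_gradient_le (hf : Differentiable ℝ f)
    (hβ : ∀ x y, ‖gradient f x - gradient f y‖ ≤ β * ‖x - y‖) (x h : E) :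
    |f (x + h) - f x - ⟪gradient f x, h⟫| ≤ β / 2 * ‖h‖ ^ 2 := by
  set φ : ℝ → ℝ := fun t => f (x + t • h) - f x - t * ⟪gradient f x, h⟫
  have hφ : ∀ t, HasDerivAt φ ⟪gradient f (x + t • h) - gradient f x, h⟫ t := by
    intro t
    have hline : HasDerivAt (fun t : ℝ => x + t • h) h t := by
      simpa using ((hasDerivAt_id t).smul_const h).const_add x
    refine ((((hf _).hasFDerivAt.comp_hasDerivAt t hline).sub_const (f x)).sub
      ((hasDerivAt_id t).mul_const ⟪gradient f x, h⟫)).congr_deriv ?_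
    simp only [inner_sub_left, inner_gradient_left, one_mul]
  have hbound : ∀ t ∈ Ico (0 : ℝ) 1,
      ‖⟪gradient f (x + t • h) - gradient f x, h⟫‖ ≤ β * t * ‖h‖ ^ 2 := by
    intro t ⟨ht, _⟩
    calc ‖⟪gradient f (x + t • h) - gradient f x, h⟫‖
        ≤ ‖gradient f (x + t • h) - gradient f x‖ * ‖h‖ := norm_inner_le_norm _ _
      _ ≤ β * ‖x + t • h - x‖ * ‖h‖ := by gcongr; exact hβ _ _
      _ = β * t * ‖h‖ ^ 2 := by
        rw [add_sub_cancel_left, norm_smul, Real.norm_of_nonneg ht]; ring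
  have hφ_one := image_norm_le_of_norm_deriv_right_le_deriv_boundary
    (fun t _ => (hφ t).continuousAt.continuousWithinAt) (fun t _ => (hφ t).hasDerivWithinAt)
    (B := fun t => β / 2 * t ^ 2 * ‖h‖ ^ 2) (by simp [φ])
    (fun t => (((hasDerivAt_pow 2 t).const_mul (β / 2)).mul_const (‖h‖ ^ 2)).congr_deriv
      (by push_cast; ring))
    hbound (right_mem_Icc.2 zero_le_one)
  simpa [φ] using hφ_one

theorem abs_sub_sub_two_inner_gradient_le (hf : Differentiable ℝ f)
    (hβ : ∀ x y, ‖gradient f x - gradient f y‖ ≤ β * ‖x - y‖) (x h : E) :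
    |f (x + h) - f (x - h) - 2 * ⟪gradient f x, h⟫| ≤ β * ‖h‖ ^ 2 := by
  have hplus := abs_sub_sub_inner_gradient_le hf hβ x h
  have hminus := abs_sub_sub_inner_gradient_le hf hβ x (-h)
  rw [inner_neg_right, norm_neg, ← sub_eq_add_neg] at hminus
  rw [abs_le] at *
  constructor <;> linarith [hplus.1, hplus.2, hminus.1, hminus.2]

theorem norm_integral_sub_sub_two_inner_gradient_smul_le [MeasurableSpace E] {μ : Measure E}
    [IsProbabilityMeasure μ] (hsphere : ∀ᵐ v ∂μ, v ∈ Metric.sphere 0 1) (hf : Differentiable ℝ f)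
    (hβ : ∀ x y, ‖gradient f x - gradient f y‖ ≤ β * ‖x - y‖) {δ : ℝ} (hδ : 0 ≤ δ) (y : E) :
    ‖∫ v, (f (y + δ • v) - f (y - δ • v) - 2 * ⟪gradient f y, δ • v⟫) • v ∂μ‖ ≤ β * δ ^ 2 := by
  refine (norm_integral_le_of_norm_le_const (C := β * δ ^ 2) (hsphere.mono fun v hv => ?_)).trans_eq
    (by simp)
  rw [mem_sphere_zero_iff_norm] at hv
  have := abs_sub_sub_two_inner_gradient_le hf hβ y (δ • v)
  rw [norm_smul, hv, mul_one, Real.norm_of_nonneg hδ] at this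
  rwa [norm_smul, hv, mul_one, Real.norm_eq_abs]

end LipschitzGradient

theorem Continuous.integrable_of_ae_mem_isCompact {X F : Type*} [TopologicalSpace X] [T2Space X]
    [MeasurableSpace X] [OpensMeasurableSpace X] [NormedAddCommGroup F] {μ : Measure X}
    [IsFiniteMeasure μ] {K : Set X} {g : X → F} (hg : Continuous g) (hK : IsCompact K)
    (hμ : ∀ᵐ x ∂μ, x ∈ K) : Integrable g μ := by
  simpa [IntegrableOn, Measure.restrict_eq_self_of_ae_mem hμ] using
    hg.continuousOn.integrableOn_compact (μ := μ) hK

theorem integral_comp_linearIsometryEquiv_of_map_eq {E F : Type*} [NormedAddCommGroup E]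
    [NormedSpace ℝ E] [MeasurableSpace E] [BorelSpace E] [NormedAddCommGroup F] [NormedSpace ℝ F]
    {μ : Measure E} (e : E ≃ₗᵢ[ℝ] E) (he : Measure.map e μ = μ) (g : E → F) :
    ∫ v, g (e v) ∂μ = ∫ v, g v ∂μ :=
  (MeasurePreserving.mk e.continuous.measurable he).integral_comp
    e.toHomeomorph.measurableEmbedding g

section IsotropicMoments

variable {ι : Type*} [Fintype ι] {μ : Measure (EuclideanSpace ℝ ι)}

variable (hinv : ∀ e : EuclideanSpace ℝ ι ≃ₗᵢ[ℝ] EuclideanSpace ℝ ι, Measure.map e μ = μ)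
include hinv

theorem integral_coord_mul_coord_of_ne {i j : ι} (hij : i ≠ j) : ∫ v, v i * v j ∂μ = 0 := by
  classical
  let e := LinearIsometryEquiv.piLpCongrRight 2
    fun k : ι => if k = i then LinearIsometryEquiv.neg ℝ (E := ℝ) else LinearIsometryEquiv.refl ℝ ℝ
  have he : ∀ v k, e v k = if k = i then -v k else v k := by
    intro v k
    by_cases hk : k = i <;> simp [e, hk]
  have := integral_comp_linearIsometryEquiv_of_map_eq e (hinv e) fun v => v i * v j
  simp only [he, ↓reduceIte, if_neg hij.symm, neg_mul, integral_neg] at this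
  linarith

theorem integral_coord_mul_self_eq (i j : ι) : ∫ v, v i * v i ∂μ = ∫ v, v j * v j ∂μ := by
  classical
  let e := LinearIsometryEquiv.piLpCongrLeft 2 ℝ ℝ (Equiv.swap i j)
  have he : ∀ v, e v i = v j := by
    intro v
    simp [e, LinearIsometryEquiv.piLpCongrLeft_apply, Equiv.piCongrLeft'_apply]
  simpa [he] using (integral_comp_linearIsometryEquiv_of_map_eq e (hinv e) fun v => v i * v i).symm

variable [IsProbabilityMeasure μ] (hsphere : ∀ᵐ v ∂μ, v ∈ Metric.sphere 0 1)
include hsphere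

theorem card_mul_integral_coord_mul_self (j : ι) :
    (Fintype.card ι : ℝ) * ∫ v, v j * v j ∂μ = 1 := by
  have hint : ∀ i, Integrable (fun v : EuclideanSpace ℝ ι => v i * v i) μ := fun i =>
    (by fun_prop : Continuous _).integrable_of_ae_mem_isCompact (isCompact_sphere 0 1) hsphere
  calc (Fintype.card ι : ℝ) * ∫ v, v j * v j ∂μ = ∑ i, ∫ v, v i * v i ∂μ := by
        simp [integral_coord_mul_self_eq hinv _ j]
    _ = ∫ v, ‖v‖ ^ 2 ∂μ := by
        rw [← integral_finsetSum _ fun i _ => hint i]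
        simp_rw [EuclideanSpace.real_norm_sq_eq, sq]
    _ = 1 := integral_eq_const (hsphere.mono fun v hv => by
        rw [mem_sphere_zero_iff_norm.mp hv, one_pow])

theorem card_smul_integral_inner_smul (a : EuclideanSpace ℝ ι) :
    (Fintype.card ι : ℝ) • ∫ v, ⟪a, v⟫ • v ∂μ = a := by
  have hint : Integrable (fun v : EuclideanSpace ℝ ι => ⟪a, v⟫ • v) μ :=
    (by fun_prop : Continuous _).integrable_of_ae_mem_isCompact (isCompact_sphere 0 1) hsphere
  have hint' : ∀ i j, Integrable (fun v : EuclideanSpace ℝ ι => a i * (v i * v j)) μ := fun i j =>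
    (by fun_prop : Continuous _).integrable_of_ae_mem_isCompact (isCompact_sphere 0 1) hsphere
  ext j
  calc ((Fintype.card ι : ℝ) • ∫ v, ⟪a, v⟫ • v ∂μ) j
      = Fintype.card ι * ∫ v, ∑ i, a i * (v i * v j) ∂μ := by
        have hproj : (∫ v, ⟪a, v⟫ • v ∂μ) j = ∫ v, ⟪a, v⟫ * v j ∂μ :=
          ((EuclideanSpace.proj j).integral_comp_comm hint).symm
        rw [PiLp.smul_apply, smul_eq_mul, hproj]
        congr 2 with v
        rw [PiLp.inner_apply, Finset.sum_mul]
        congr 1 with i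
        simp only [RCLike.inner_apply, conj_trivial]
        ring
    _ = a j * (Fintype.card ι * ∫ v, v j * v j ∂μ) := by
        rw [integral_finsetSum _ fun i _ => hint' i j, Finset.sum_eq_single j]
        · rw [integral_const_mul]; ring
        · intro i _ hij
          rw [integral_const_mul, integral_coord_mul_coord_of_ne hinv hij, mul_zero]
        · simp
    _ = a j := by rw [card_mul_integral_coord_mul_self hinv hsphere, mul_one]

end IsotropicMoments

theorem bias_variance_reduced_estimator_general {d : ℕ}
    (μ : Measure (EuclideanSpace ℝ (Fin d))) [IsProbabilityMeasure μ]
    (hsupp : μ (Metric.sphere (0 : EuclideanSpace ℝ (Fin d)) 1) = 1)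
    (hinv : ∀ e : EuclideanSpace ℝ (Fin d) ≃ₗᵢ[ℝ] EuclideanSpace ℝ (Fin d),
      Measure.map e μ = μ)
    (f : EuclideanSpace ℝ (Fin d) → ℝ) (β δ : ℝ) (hδ : 0 < δ)
    (hf : Differentiable ℝ f)
    (hβ : ∀ x y, ‖gradient f x - gradient f y‖ ≤ β * ‖x - y‖)
    (y m : EuclideanSpace ℝ (Fin d)) :
    ‖(∫ v, (m + (((d : ℝ) / (2 * δ)) *
        (f (y + δ • v) - f (y - δ • v) - 2 * δ * ⟪m, v⟫)) • v) ∂μ) - gradient f y‖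
      ≤ ((d : ℝ) / 2) * β * δ := by
  set g := gradient f y
  set R : EuclideanSpace ℝ (Fin d) → ℝ := fun v => f (y + δ • v) - f (y - δ • v) - 2 * ⟪g, δ • v⟫
  have hsphere : ∀ᵐ v ∂μ, v ∈ Metric.sphere 0 1 :=
    (ae_mem_iff_measure_eq Metric.isClosed_sphere.nullMeasurableSet).2 (by rw [hsupp, measure_univ])
  have hint : ∀ φ : EuclideanSpace ℝ (Fin d) → EuclideanSpace ℝ (Fin d), Continuous φ →
      Integrable φ μ := fun φ hφ => hφ.integrable_of_ae_mem_isCompact (isCompact_sphere 0 1) hsphere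
  have hf_cont := hf.continuous
  have hRint : Integrable (fun v => R v • v) μ := hint _ (by fun_prop)
  have hMint : Integrable (fun v => ⟪g - m, v⟫ • v) μ := hint _ (by fun_prop)
  have hsplit : ∀ v : EuclideanSpace ℝ (Fin d),
      m + ((d / (2 * δ)) * (f (y + δ • v) - f (y - δ • v) - 2 * δ * ⟪m, v⟫)) • v
        = m + (d : ℝ) • (⟪g - m, v⟫ • v) + (d / (2 * δ)) • (R v • v) := by
    intro v
    simp only [R, inner_smul_right, inner_sub_left, smul_smul, add_assoc, ← add_smul]
    congr 2
    field_simp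
    ring
  have hmean : ∫ v, (m + (d : ℝ) • (⟪g - m, v⟫ • v)) ∂μ = g := by
    have hiso := card_smul_integral_inner_smul hinv hsphere (g - m)
    rw [Fintype.card_fin] at hiso
    rw [integral_add (integrable_const m) (hMint.fun_smul _), integral_smul, hiso]
    simp
  simp_rw [hsplit]
  rw [integral_add ((integrable_const m).fun_add (hMint.fun_smul _)) (hRint.fun_smul _), hmean,
    integral_smul, add_sub_cancel_left, norm_smul, Real.norm_of_nonneg (by positivity)]
  calc (d : ℝ) / (2 * δ) * ‖∫ v, R v • v ∂μ‖ ≤ d / (2 * δ) * (β * δ ^ 2) := by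
        gcongr
        exact norm_integral_sub_sub_two_inner_gradient_smul_le hsphere hf hβ hδ.le y
    _ = d / 2 * β * δ := by
        field_simp

/-- With `f` `β`-smooth, `Δ = f(y+δv) - f(y-δv) - 2δ⟨m,v⟩`,
`ĝ = m + (d/(2δ)) Δ v` and `v` uniform on `S^{d-1}`, the bias `b = E[ĝ] - ∇f(y)`
satisfies `‖b‖ ≤ (d/2) β δ`. -/
theorem bias_variance_reduced_estimator {d : ℕ} (hd : 0 < d)
    (μ : Measure (EuclideanSpace ℝ (Fin d))) [IsProbabilityMeasure μ]
    (hsupp : μ (Metric.sphere (0 : EuclideanSpace ℝ (Fin d)) 1) = 1)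
    (hinv : ∀ e : EuclideanSpace ℝ (Fin d) ≃ₗᵢ[ℝ] EuclideanSpace ℝ (Fin d),
      Measure.map e μ = μ)
    (f : EuclideanSpace ℝ (Fin d) → ℝ) (β δ : ℝ) (hδ : 0 < δ)
    (hf : Differentiable ℝ f)
    (hβ : ∀ x y, ‖gradient f x - gradient f y‖ ≤ β * ‖x - y‖)
    (y m : EuclideanSpace ℝ (Fin d)) :
    ‖(∫ v, (m + (((d : ℝ) / (2 * δ)) *
        (f (y + δ • v) - f (y - δ • v) - 2 * δ * ⟪m, v⟫)) • v) ∂μ) - gradient f y‖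
      ≤ ((d : ℝ) / 2) * β * δ :=
  bias_variance_reduced_estimator_general μ hsupp hinv f β δ hδ hf hβ y m
end

section
/- In the optimistic projected-gradient scheme y_t = Π_C(y'_t - η m_t), y'_{t+1} = Π_C(y'_t - η ĝ_t) on a closed convex set C with diameter at most D, for any comparator sequence (u'_t)_{t=1}^T ⊆ C: Σ_{t=1}^T ⟨ĝ_t, y_t - u'_t⟩ ≤ (D² + 2D P_T)/(2η) + η Σ_{t=1}^T ‖ĝ_t - m_t‖², where P_T = Σ_{t=2}^T ‖u'_t - u'_{t-1}‖. -/
/-!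
Each round is analysed through the variational inequalities of the two projections. With
`a = y'_t`, `b = y_t`, `c = y'_{t+1}`, they bound `η ⟪m_t, b - c⟫` and `η ⟪ĝ_t, c - u_t⟫` by
three-point identities, and Young's inequality absorbs the remaining `η ⟪ĝ_t - m_t, b - c⟫`
into `η² ‖ĝ_t - m_t‖²` and `‖b - c‖²`. This leaves the potential drop
`(‖y'_t - u_t‖² - ‖y'_{t+1} - u_t‖²) / (2η)`, which telescopes except for the comparator
switches `‖y'_{t+1} - u_{t+1}‖² - ‖y'_{t+1} - u_t‖² ≤ 2D ‖u_{t+1} - u_t‖`.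
-/

open scoped RealInnerProductSpace

section InnerProductSpace

variable {E : Type*} [NormedAddCommGroup E] [InnerProductSpace ℝ E]

theorem real_inner_sub_sub_nonpos_of_forall_norm_sub_le {K : Set E} (hK : Convex ℝ K)
    {x p w : E} (hp : p ∈ K) (hmin : ∀ v ∈ K, ‖x - p‖ ≤ ‖x - v‖) (hw : w ∈ K) :
    ⟪x - p, w - p⟫ ≤ 0 := by
  have : Nonempty K := ⟨⟨p, hp⟩⟩
  refine (norm_eq_iInf_iff_real_inner_le_zero hK hp).1 (le_antisymm ?_ ?_) w hw
  · exact le_ciInf fun v => hmin v v.2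
  · exact ciInf_le ⟨0, by rintro _ ⟨v, rfl⟩; exact norm_nonneg _⟩ (⟨p, hp⟩ : K)

theorem two_mul_real_inner_sub_sub_eq (a b c : E) :
    2 * ⟪a - b, b - c⟫ = ‖a - c‖ ^ 2 - ‖a - b‖ ^ 2 - ‖b - c‖ ^ 2 := by
  have h := norm_add_sq_real (a - b) (b - c)
  rw [sub_add_sub_cancel] at h
  linarith

/-- One round of optimistic projected gradient: `b` and `c` satisfy the variational inequalities
of `b = Π(a - η M)` and `c = Π(a - η G)` (tested at `c` and `w` respectively). -/
theorem optimistic_step_inner_le {a b c w G M : E} {η : ℝ} (hη : 0 < η)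
    (hb : ⟪a - η • M - b, c - b⟫ ≤ 0) (hc : ⟪a - η • G - c, w - c⟫ ≤ 0) :
    ⟪G, b - w⟫ ≤ η / 2 * ‖G - M‖ ^ 2 + ‖a - w‖ ^ 2 / (2 * η) - ‖c - w‖ ^ 2 / (2 * η) := by
  have hM : η * ⟪M, b - c⟫ ≤ ⟪a - b, b - c⟫ := by
    rw [sub_right_comm, inner_sub_left, real_inner_smul_left, ← neg_sub b c, inner_neg_right,
      inner_neg_right] at hb
    linarith
  have hG : η * ⟪G, c - w⟫ ≤ ⟪a - c, c - w⟫ := by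
    rw [sub_right_comm, inner_sub_left, real_inner_smul_left, ← neg_sub c w, inner_neg_right,
      inner_neg_right] at hc
    linarith
  have hsplit : ⟪G, b - w⟫ = ⟪G - M, b - c⟫ + ⟪M, b - c⟫ + ⟪G, c - w⟫ := by
    rw [inner_sub_left, sub_add_cancel, ← inner_add_right, sub_add_sub_cancel]
  have hyoung : 2 * η * ⟪G - M, b - c⟫ ≤ η ^ 2 * ‖G - M‖ ^ 2 + ‖b - c‖ ^ 2 := by
    have h := norm_sub_sq_real (η • (G - M)) (b - c)
    rw [norm_smul, real_inner_smul_left, Real.norm_of_nonneg hη.le] at h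
    nlinarith [sq_nonneg ‖η • (G - M) - (b - c)‖]
  have key : 2 * η * ⟪G, b - w⟫ ≤ η ^ 2 * ‖G - M‖ ^ 2 + ‖a - w‖ ^ 2 - ‖c - w‖ ^ 2 := by
    have h₁ := two_mul_real_inner_sub_sub_eq a b c
    have h₂ := two_mul_real_inner_sub_sub_eq a c w
    rw [hsplit]
    linarith [sq_nonneg ‖a - b‖]
  calc ⟪G, b - w⟫ = 2 * η * ⟪G, b - w⟫ / (2 * η) := by field_simp
    _ ≤ (η ^ 2 * ‖G - M‖ ^ 2 + ‖a - w‖ ^ 2 - ‖c - w‖ ^ 2) / (2 * η) := by gcongr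
    _ = _ := by field_simp

end InnerProductSpace

theorem sq_norm_sub_sub_sq_norm_sub_le {E : Type*} [SeminormedAddCommGroup E] {p q r : E}
    {D : ℝ} (hq : ‖p - q‖ ≤ D) (hr : ‖p - r‖ ≤ D) :
    ‖p - q‖ ^ 2 - ‖p - r‖ ^ 2 ≤ 2 * D * ‖q - r‖ := by
  have h : |‖p - q‖ - ‖p - r‖| ≤ ‖q - r‖ := by
    simpa [norm_sub_rev r q] using abs_norm_sub_norm_le (p - q) (p - r)
  nlinarith [abs_le.1 h, norm_nonneg (p - q), norm_nonneg (p - r), norm_nonneg (q - r)]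

theorem sum_Icc_le_of_le_add_sub {r e φ ψ δ : ℕ → ℝ} (hr : ∀ t, r t ≤ e t + φ t - ψ t)
    (hδ : ∀ t, φ (t + 1) ≤ ψ t + δ (t + 1)) {T : ℕ} (hT : 1 ≤ T) :
    ∑ t ∈ Finset.Icc 1 T, r t ≤
      φ 1 - ψ T + ∑ t ∈ Finset.Icc 2 T, δ t + ∑ t ∈ Finset.Icc 1 T, e t := by
  induction T, hT using Nat.le_induction with
  | base =>
    simp only [Finset.Icc_self, Finset.sum_singleton, Finset.Icc_eq_empty_of_lt one_lt_two,
      Finset.sum_empty]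
    linarith [hr 1]
  | succ T hT ih =>
    rw [Finset.sum_Icc_succ_top (by omega), Finset.sum_Icc_succ_top (by omega),
      Finset.sum_Icc_succ_top (by omega)]
    linarith [hr (T + 1), hδ T]

theorem optimistic_projected_gradient_dynamic_regret_general {d : ℕ}
    (C : Set (EuclideanSpace ℝ (Fin d))) (hconv : Convex ℝ C)
    (D : ℝ) (hD : ∀ x ∈ C, ∀ y ∈ C, ‖x - y‖ ≤ D)
    (P : EuclideanSpace ℝ (Fin d) → EuclideanSpace ℝ (Fin d))
    (hP : ∀ u, P u ∈ C ∧ ∀ w ∈ C, ‖u - P u‖ ≤ ‖u - w‖)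
    (η : ℝ) (hη : 0 < η)
    (m g y y' u : ℕ → EuclideanSpace ℝ (Fin d))
    (hy'1 : y' 1 ∈ C)
    (hy : ∀ t, y t = P (y' t - η • m t))
    (hy' : ∀ t, y' (t + 1) = P (y' t - η • g t))
    (hu : ∀ t, u t ∈ C)
    (T : ℕ) :
    ∑ t ∈ Finset.Icc 1 T, ⟪g t, y t - u t⟫ ≤
      (D ^ 2 + 2 * D * ∑ t ∈ Finset.Icc 2 T, ‖u t - u (t - 1)‖) / (2 * η)
        + η * ∑ t ∈ Finset.Icc 1 T, ‖g t - m t‖ ^ 2 := by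
  rcases Nat.eq_zero_or_pos T with rfl | hT
  · simpa using (by positivity : 0 ≤ D ^ 2 / (2 * η))
  have hVI x {w} : w ∈ C → ⟪x - P x, w - P x⟫ ≤ 0 :=
    real_inner_sub_sub_nonpos_of_forall_norm_sub_le hconv (hP x).1 (hP x).2
  have hy'C t : y' (t + 1) ∈ C := hy' t ▸ (hP _).1
  have hround t : ⟪g t, y t - u t⟫ ≤ η / 2 * ‖g t - m t‖ ^ 2 + ‖y' t - u t‖ ^ 2 / (2 * η)
      - ‖y' (t + 1) - u t‖ ^ 2 / (2 * η) :=
    optimistic_step_inner_le hη (by rw [hy t, hy' t]; exact hVI _ (hP _).1)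
      (by rw [hy' t]; exact hVI _ (hu t))
  have hswitch t : ‖y' (t + 1) - u (t + 1)‖ ^ 2 / (2 * η) ≤
      ‖y' (t + 1) - u t‖ ^ 2 / (2 * η) + 2 * D * ‖u (t + 1) - u (t + 1 - 1)‖ / (2 * η) := by
    rw [Nat.add_sub_cancel, ← add_div, div_le_div_iff_of_pos_right (by positivity)]
    linarith [sq_norm_sub_sub_sq_norm_sub_le (hD _ (hy'C t) _ (hu (t + 1)))
      (hD _ (hy'C t) _ (hu t))]
  have hregret := sum_Icc_le_of_le_add_sub
    (δ := fun t => 2 * D * ‖u t - u (t - 1)‖ / (2 * η)) hround hswitch hT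
  have hstart : ‖y' 1 - u 1‖ ^ 2 / (2 * η) ≤ D ^ 2 / (2 * η) := by
    gcongr
    exact hD _ hy'1 _ (hu 1)
  rw [← Finset.sum_div, ← Finset.mul_sum, ← Finset.mul_sum] at hregret
  have hend : 0 ≤ ‖y' (T + 1) - u T‖ ^ 2 / (2 * η) := by positivity
  have hgm : 0 ≤ η * ∑ t ∈ Finset.Icc 1 T, ‖g t - m t‖ ^ 2 := by positivity
  rw [add_div]
  linarith

/-- In the optimistic projected-gradient scheme
`y_t = Π_C(y'_t - η m_t)`, `y'_{t+1} = Π_C(y'_t - η ĝ_t)` on a nonempty closed convex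
set `C` of diameter at most `D`, for any comparator sequence `(u'_t)_{t=1}^T ⊆ C`:
`Σ_{t=1}^T ⟨ĝ_t, y_t - u'_t⟩ ≤ (D² + 2D P_T)/(2η) + η Σ_{t=1}^T ‖ĝ_t - m_t‖²`,
where `P_T = Σ_{t=2}^T ‖u'_t - u'_{t-1}‖`. -/
theorem optimistic_projected_gradient_dynamic_regret {d : ℕ}
    (C : Set (EuclideanSpace ℝ (Fin d))) (hconv : Convex ℝ C)
    (hclosed : IsClosed C) (hne : C.Nonempty)
    (D : ℝ) (hD : ∀ x ∈ C, ∀ y ∈ C, ‖x - y‖ ≤ D)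
    (P : EuclideanSpace ℝ (Fin d) → EuclideanSpace ℝ (Fin d))
    (hP : ∀ u, P u ∈ C ∧ ∀ w ∈ C, ‖u - P u‖ ≤ ‖u - w‖)
    (η : ℝ) (hη : 0 < η)
    (m g y y' u : ℕ → EuclideanSpace ℝ (Fin d))
    (hy'1 : y' 1 ∈ C)
    (hy : ∀ t, y t = P (y' t - η • m t))
    (hy' : ∀ t, y' (t + 1) = P (y' t - η • g t))
    (hu : ∀ t, u t ∈ C)
    (T : ℕ) (hT : 1 ≤ T) :
    ∑ t ∈ Finset.Icc 1 T, ⟪g t, y t - u t⟫ ≤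
      (D ^ 2 + 2 * D * ∑ t ∈ Finset.Icc 2 T, ‖u t - u (t - 1)‖) / (2 * η)
        + η * ∑ t ∈ Finset.Icc 1 T, ‖g t - m t‖ ^ 2 :=
  optimistic_projected_gradient_dynamic_regret_general C hconv D hD P hP η hη m g y y' u hy'1 hy hy'
    hu T
end
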